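/- Let a ≥ 2 be an integer, let 𝒳 ⊆ {1,…,a}^ℤ be a closed shift-invariant subset with the left shift σ, and let μ be a σ-invariant probability measure on 𝒳 which is ψ-mixing with nonincreasing rates (ψ_Δ). For each m ≥ 1 let 𝒰_m ⊆ 𝒳 be measurable with respect to the coordinates {0,…,m−1}, with 𝒰_{m+1} ⊆ 𝒰_m (shrinking sequence), and write ε_m = μ(𝒰_m). Fix n ≥ 1 with minimal return time η_n of 𝒰_n satisfying η_n < n, and let q > n be an integer. Then | ∫ 1_{𝒰_n} · ∏_{i=n}^{q} 1_{𝒰_n^c}∘σ^i dμ − ∫ 1_{𝒰_n} · ∏_{i=η_n}^{q} 1_{𝒰_n^c}∘σ^i dμ | ≤ n·ε_n·ε_{⌊η_n/2⌋}·(1 + ψ_{⌊η_n/2⌋}). -/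

import Mathlib

open MeasureTheory Filter Set ENNReal

noncomputable section

/-- The full shift space on an alphabet with `a` symbols (modeling `{1,…,a}` by `Fin a`). -/
abbrev FullShift (a : ℕ) := ℤ → Fin a

/-- The left shift `(σ x)_k = x_{k+1}`. -/
def shift {a : ℕ} (x : FullShift a) : FullShift a := fun k => x (k + 1)

/-- Entry time to `U`: `τ_U(x) = inf {k ≥ 1 : σ^k x ∈ U}` (`∞` if the orbit never enters `U`). -/
def entryTime {a : ℕ} (U : Set (FullShift a)) (x : FullShift a) : ℕ∞ :=
  ⨅ k ∈ {k : ℕ | 1 ≤ k ∧ shift^[k] x ∈ U}, (k : ℕ∞)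

/-- Minimal return time `η = inf {τ_U(x) : x ∈ U}` (as a natural number; `0` if there is no return). -/
def minReturn {a : ℕ} (U : Set (FullShift a)) : ℕ :=
  sInf {k : ℕ | 1 ≤ k ∧ ∃ x ∈ U, shift^[k] x ∈ U}

/-- The sub-σ-algebra of the product σ-algebra generated by the coordinates in `s ⊆ ℤ`. -/
def coordMS {a : ℕ} (s : Set ℤ) : MeasurableSpace (FullShift a) :=
  MeasurableSpace.comap (fun (x : FullShift a) (i : s) => x (i : ℤ)) inferInstance

/-- `μ` is ψ-mixing with rates `ψ`: `ψ Δ → 0` and for every set `U` measurable w.r.t. the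
coordinates `{0,…,n−1}` and every `V` measurable w.r.t. the nonnegative coordinates,
`|μ(U ∩ σ^{-(Δ+n)}V) − μ(U)μ(V)| ≤ ψ_Δ μ(U) μ(V)`. -/
def PsiMixing {a : ℕ} (μ : Measure (FullShift a)) (ψ : ℕ → ℝ) : Prop :=
  Tendsto ψ atTop (nhds 0) ∧
    ∀ (n Δ : ℕ) (U V : Set (FullShift a)),
      MeasurableSet[coordMS (Ico (0 : ℤ) (n : ℤ))] U →
      MeasurableSet[coordMS {i : ℤ | 0 ≤ i}] V →
      |(μ (U ∩ shift^[Δ + n] ⁻¹' V)).toReal - (μ U).toReal * (μ V).toReal| ≤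
        ψ Δ * (μ U).toReal * (μ V).toReal

/-!
Both integrals are the measures of the points of `U_n` that avoid `U_n` during a window of times,
`[n, q]` and `[η_n, q]` respectively. Their difference is therefore covered by the returns to `U_n`
at times `i ∈ [η_n, n)`. For such `i`, `U_n ∩ σ^{-i} U_n ⊆ U_j ∩ σ^{-i} U_n` with `j = ⌊η_n/2⌋`,
and the gap `i - j ≥ j` lets ψ-mixing bound its measure by `ε_j ε_n (1 + ψ_j)`; there are at most
`n` such times. If `U_n` has no return at all (`η_n = 0`), Poincaré recurrence forces `ε_n = 0`.
-/

section Avoid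

variable {α : Type*} (f : α → α) (A : Set α)

def avoidSet (s : Finset ℕ) : Set α := A ∩ ⋂ i ∈ s, f^[i] ⁻¹' Aᶜ

lemma indicator_mul_prod_indicator_compl_iterate (s : Finset ℕ) (x : α) :
    A.indicator (fun _ => (1 : ℝ)) x * ∏ i ∈ s, (Aᶜ).indicator (fun _ => (1 : ℝ)) (f^[i] x) =
      (avoidSet f A s).indicator 1 x := by
  classical
  simp only [avoidSet, indicator_apply, mem_inter_iff, mem_iInter, mem_preimage, mem_compl_iff,
    Finset.prod_ite, Finset.prod_const_one, Finset.prod_const, Pi.one_apply]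
  split_ifs <;> simp_all [Finset.filter_eq_empty_iff]

variable {f A}

lemma avoidSet_anti {s t : Finset ℕ} (hst : s ⊆ t) : avoidSet f A t ⊆ avoidSet f A s :=
  inter_subset_inter_right _ (biInter_subset_biInter_left fun _ hi => hst hi)

lemma avoidSet_diff_subset (s t : Finset ℕ) :
    avoidSet f A s \ avoidSet f A t ⊆ ⋃ i ∈ t \ s, A ∩ f^[i] ⁻¹' A := by
  classical
  rintro x ⟨⟨hxA, hxs⟩, hxt⟩
  obtain ⟨i, hit, hiA⟩ : ∃ i ∈ t, f^[i] x ∈ A := by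
    by_contra! h
    exact hxt ⟨hxA, mem_iInter₂.2 h⟩
  have his : i ∉ s := fun his => mem_iInter₂.1 hxs i his hiA
  exact mem_biUnion (Finset.mem_sdiff.2 ⟨hit, his⟩) ⟨hxA, hiA⟩

lemma measurableSet_avoidSet [MeasurableSpace α] (hf : Measurable f) (hA : MeasurableSet A)
    (s : Finset ℕ) : MeasurableSet (avoidSet f A s) :=
  hA.inter (Finset.measurableSet_biInter _ fun i _ => hf.iterate i hA.compl)

lemma abs_measureReal_avoidSet_sub_le [MeasurableSpace α] (μ : Measure α) [IsFiniteMeasure μ]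
    {s t : Finset ℕ} (hst : s ⊆ t) :
    |μ.real (avoidSet f A s) - μ.real (avoidSet f A t)| ≤
      ∑ i ∈ t \ s, μ.real (A ∩ f^[i] ⁻¹' A) := by
  rw [abs_of_nonneg (sub_nonneg.2 (measureReal_mono (avoidSet_anti hst)))]
  calc μ.real (avoidSet f A s) - μ.real (avoidSet f A t)
      ≤ μ.real (avoidSet f A s \ avoidSet f A t) := le_measureReal_sdiff
    _ ≤ μ.real (⋃ i ∈ t \ s, A ∩ f^[i] ⁻¹' A) := measureReal_mono (avoidSet_diff_subset s t) (measure_ne_top _ _)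
    _ ≤ ∑ i ∈ t \ s, μ.real (A ∩ f^[i] ⁻¹' A) := measureReal_biUnion_finset_le _ _

end Avoid

lemma coordMS_le {a : ℕ} (s : Set ℤ) : coordMS (a := a) s ≤ MeasurableSpace.pi := by
  rintro t ⟨t', ht', rfl⟩
  exact (measurable_pi_lambda _ fun i => measurable_pi_apply _) ht'

lemma coordMS_mono {a : ℕ} {s t : Set ℤ} (hst : s ⊆ t) :
    coordMS (a := a) s ≤ coordMS t := by
  rintro w ⟨w', hw', rfl⟩
  exact ⟨(fun (y : t → Fin a) (i : s) => y ⟨i, hst i.2⟩) ⁻¹' w',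
    (measurable_pi_lambda _ fun i => measurable_pi_apply _) hw', rfl⟩

lemma measure_eq_zero_of_minReturn_eq_zero {a : ℕ} {μ : Measure (FullShift a)}
    [IsFiniteMeasure μ] (hσ : MeasurePreserving shift μ μ) {A : Set (FullShift a)}
    (hA : MeasurableSet A) (h : minReturn A = 0) : μ A = 0 := by
  by_contra hA0
  obtain ⟨x, hx, k, hk, hkx⟩ := hσ.exists_mem_iterate_mem hA.nullMeasurableSet hA0
  have hmem : k ∈ {k : ℕ | 1 ≤ k ∧ ∃ x ∈ A, shift^[k] x ∈ A} :=
    ⟨Nat.one_le_iff_ne_zero.2 hk, x, hx, hkx⟩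
  have := (Nat.sInf_mem ⟨k, hmem⟩).1
  rw [minReturn] at h
  omega

namespace PsiMixing

variable {a : ℕ} {μ : Measure (FullShift a)} {ψ : ℕ → ℝ}

lemma nonneg (hmix : PsiMixing μ ψ) (hanti : Antitone ψ) (Δ : ℕ) : 0 ≤ ψ Δ :=
  le_of_tendsto hmix.1 (eventually_atTop.2 ⟨Δ, fun _ hk => hanti hk⟩)

lemma measureReal_inter_preimage_le (hmix : PsiMixing μ ψ) (hanti : Antitone ψ)
    {m Δ j : ℕ} {V W : Set (FullShift a)} (hV : MeasurableSet[coordMS (Ico (0 : ℤ) m)] V)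
    (hW : MeasurableSet[coordMS {i : ℤ | 0 ≤ i}] W) (hj : j ≤ Δ) :
    μ.real (V ∩ shift^[Δ + m] ⁻¹' W) ≤ μ.real V * μ.real W * (1 + ψ j) := by
  have hmixVW := (abs_le.1 (hmix.2 m Δ V W hV hW)).2
  simp only [← measureReal_def] at hmixVW
  have hψ : ψ Δ ≤ ψ j := hanti hj
  have hVW : 0 ≤ μ.real V * μ.real W := by positivity
  nlinarith

lemma measureReal_inter_preimage_iterate_le [IsFiniteMeasure μ] (hmix : PsiMixing μ ψ) (hanti : Antitone ψ)
    {U : ℕ → Set (FullShift a)} (hU : Antitone U)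
    (hUmeas : ∀ m : ℕ, 1 ≤ m → MeasurableSet[coordMS (Ico (0 : ℤ) (m : ℤ))] (U m))
    {i j n : ℕ} (hji : 2 * j ≤ i) (hi : 1 ≤ i) (hjn : j ≤ n) (hn : 1 ≤ n) :
    μ.real (U n ∩ shift^[i] ⁻¹' U n) ≤ μ.real (U n) * μ.real (U j) * (1 + ψ j) := by
  -- `U 0` carries no measurability assumption, so condition on `U (max j 1)` instead.
  set m := max j 1
  have hm : i - m + m = i := by omega
  have hVW : U n ∩ shift^[i] ⁻¹' U n ⊆ U m ∩ shift^[i - m + m] ⁻¹' U n := by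
    rw [hm]
    exact inter_subset_inter_left _ (hU (max_le hjn hn))
  have hW : MeasurableSet[coordMS {i : ℤ | 0 ≤ i}] (U n) :=
    coordMS_mono (fun _ hk => hk.1) _ (hUmeas n hn)
  have hmix_m := hmix.measureReal_inter_preimage_le hanti (hUmeas m (le_max_right _ _)) hW
    (show j ≤ i - m by omega)
  have hUm : μ.real (U m) ≤ μ.real (U j) := measureReal_mono (hU (le_max_left _ _))
  have := hmix.nonneg hanti j
  calc μ.real (U n ∩ shift^[i] ⁻¹' U n)
      ≤ μ.real (U m) * μ.real (U n) * (1 + ψ j) := (measureReal_mono hVW).trans hmix_m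
    _ ≤ μ.real (U j) * μ.real (U n) * (1 + ψ j) := by gcongr
    _ = μ.real (U n) * μ.real (U j) * (1 + ψ j) := by ring

end PsiMixing

theorem short_return_bound_general
    (a : ℕ)
    (μ : Measure (FullShift a)) [IsProbabilityMeasure μ]
    (hinv : MeasurePreserving (shift (a := a)) μ μ)
    (ψ : ℕ → ℝ) (hmix : PsiMixing μ ψ) (hanti : Antitone ψ)
    (U : ℕ → Set (FullShift a))
    (hUmeas : ∀ m : ℕ, 1 ≤ m → MeasurableSet[coordMS (Ico (0 : ℤ) (m : ℤ))] (U m))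
    (hshrink : ∀ m : ℕ, U (m + 1) ⊆ U m)
    (n : ℕ) (hη : minReturn (U n) < n)
    (q : ℕ) :
    |(∫ x, (U n).indicator (fun _ => (1 : ℝ)) x *
          ∏ i ∈ Finset.Icc n q, ((U n)ᶜ).indicator (fun _ => (1 : ℝ)) (shift^[i] x) ∂μ) -
        (∫ x, (U n).indicator (fun _ => (1 : ℝ)) x *
          ∏ i ∈ Finset.Icc (minReturn (U n)) q,
            ((U n)ᶜ).indicator (fun _ => (1 : ℝ)) (shift^[i] x) ∂μ)| ≤
      (n : ℝ) * (μ (U n)).toReal * (μ (U (minReturn (U n) / 2))).toReal *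
        (1 + ψ (minReturn (U n) / 2)) := by
  set η := minReturn (U n)
  have hn : 1 ≤ n := by omega
  have hA : MeasurableSet (U n) := coordMS_le _ _ (hUmeas n hn)
  set B := μ.real (U n) * μ.real (U (η / 2)) * (1 + ψ (η / 2))
  have hreturn : ∀ i ∈ Finset.Icc η q \ Finset.Icc n q,
      μ.real (U n ∩ shift^[i] ⁻¹' U n) ≤ B := by
    intro i hi
    simp only [Finset.mem_sdiff, Finset.mem_Icc, not_and, not_le] at hi
    rcases Nat.eq_zero_or_pos η with hη0 | hη0
    · have hA0 : μ.real (U n) = 0 := by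
        simp [measureReal_def, measure_eq_zero_of_minReturn_eq_zero hinv hA hη0]
      calc μ.real (U n ∩ shift^[i] ⁻¹' U n) ≤ μ.real (U n) := measureReal_mono inter_subset_left
        _ = B := by simp only [B, hA0, zero_mul]
    · exact hmix.measureReal_inter_preimage_iterate_le hanti (antitone_nat_of_succ_le hshrink)
        hUmeas (by omega) (by omega) (by omega) hn
  have hcard : (Finset.Icc η q \ Finset.Icc n q).card ≤ n :=
    (Finset.card_le_card fun i hi => by
      simp only [Finset.mem_sdiff, Finset.mem_Icc, not_and, not_le, Finset.mem_range] at hi ⊢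
      omega).trans_eq (Finset.card_range n)
  have hB : 0 ≤ B := by have := hmix.nonneg hanti (η / 2); positivity
  simp_rw [indicator_mul_prod_indicator_compl_iterate,
    integral_indicator_one (measurableSet_avoidSet hinv.measurable hA _)]
  calc _ ≤ ∑ i ∈ Finset.Icc η q \ Finset.Icc n q, μ.real (U n ∩ shift^[i] ⁻¹' U n) :=
        abs_measureReal_avoidSet_sub_le μ (Finset.Icc_subset_Icc_left hη.le)
    _ ≤ ∑ i ∈ Finset.Icc η q \ Finset.Icc n q, B := Finset.sum_le_sum hreturn
    _ ≤ n * B := by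
        rw [Finset.sum_const, nsmul_eq_mul]
        gcongr
    _ = _ := by simp only [B, measureReal_def]; ring

/-- Lemma 4.6 of the paper (the case `η_n < n`), used in the proof of the First Corollary. -/
theorem short_return_bound
    (a : ℕ) (ha : 2 ≤ a)
    (𝒳 : Set (FullShift a)) (h𝒳closed : IsClosed 𝒳) (h𝒳inv : shift ⁻¹' 𝒳 = 𝒳)
    (μ : Measure (FullShift a)) [IsProbabilityMeasure μ] (hμ𝒳 : μ 𝒳 = 1)
    (hinv : MeasurePreserving (shift (a := a)) μ μ)
    (ψ : ℕ → ℝ) (hmix : PsiMixing μ ψ) (hanti : Antitone ψ)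
    (U : ℕ → Set (FullShift a))
    (hUmeas : ∀ m : ℕ, 1 ≤ m → MeasurableSet[coordMS (Ico (0 : ℤ) (m : ℤ))] (U m))
    (hshrink : ∀ m : ℕ, U (m + 1) ⊆ U m)
    (n : ℕ) (hn : 1 ≤ n) (hη : minReturn (U n) < n)
    (q : ℕ) (hq : n < q) :
    |(∫ x, (U n).indicator (fun _ => (1 : ℝ)) x *
          ∏ i ∈ Finset.Icc n q, ((U n)ᶜ).indicator (fun _ => (1 : ℝ)) (shift^[i] x) ∂μ) -
        (∫ x, (U n).indicator (fun _ => (1 : ℝ)) x *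
          ∏ i ∈ Finset.Icc (minReturn (U n)) q,
            ((U n)ᶜ).indicator (fun _ => (1 : ℝ)) (shift^[i] x) ∂μ)| ≤
      (n : ℝ) * (μ (U n)).toReal * (μ (U (minReturn (U n) / 2))).toReal *
        (1 + ψ (minReturn (U n) / 2)) :=
  short_return_bound_general a μ hinv ψ hmix hanti U hUmeas hshrink n hη q
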